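/- Third Goodstein sequence theorem: for every natural number m ≥ 1, the Goodstein sequence G(m) reaches 0 (i.e., there exists n ≥ 1 with G(n, m) = 0) if and only if there exists a natural number k ≥ 2 such that the sequence L(·, k) dominates G(m), in the sense that for every n ≥ 1 with G(n, m) ≠ 0 one has L(n, k) > G(n, m), and L(·, k) itself reaches 0 (i.e., there exists q ≥ 1 with L(q, k) = 0). -/

import Mathlib

/-- `hsub b u m` substitutes the value `u` for the base `b` throughout the
hereditary base-`b` representation of `m` (with `hsub b u 0 = 0`). -/
def hsub (b u : ℕ) (m : ℕ) : ℕ :=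
  if m = 0 then 0
  else
    u ^ hsub b u (Nat.log b m) * (m / b ^ Nat.log b m) + hsub b u (m % b ^ Nat.log b m)
termination_by m
decreasing_by
  · exact Nat.log_lt_self b (by assumption)
  · have hpos : 0 < b ^ Nat.log b m := by
      rcases Nat.eq_zero_or_pos b with hb | hb
      · simp [hb]
      · exact pow_pos hb _
    exact lt_of_lt_of_le (Nat.mod_lt _ hpos) (Nat.pow_log_le_self b (by assumption))

/-- Goodstein's base-change ("bumping") function: replace the base `b` by `b + 1`
throughout the hereditary base-`b` representation of `m` (with `B b 0 = 0`). -/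
def B (b m : ℕ) : ℕ := hsub b (b + 1) m

/-- The Goodstein sequence of `m`: `G 1 m = m`, and `G (k+1) m = B (k+1) (G k m) - 1`
for `k ≥ 1` (truncated subtraction), so the `k`-th term is written in hereditary
base `k + 1`. -/
def G : ℕ → ℕ → ℕ
  | 0, m => m
  | 1, m => m
  | (k + 2), m => B (k + 2) (G (k + 1) m) - 1

/-- The auxiliary Goodstein-type sequence: `L 1 k = k ^ k` (written in hereditary
base `k`), and `L (n+1) k = B (k+n-1) (L n k) - 1` for `n ≥ 1` (truncated
subtraction), so the `n`-th term is written in hereditary base `k + n - 1`. -/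
def L : ℕ → ℕ → ℕ
  | 0, k => k ^ k
  | 1, k => k ^ k
  | (n + 2), k => B (k + n) (L (n + 1) k) - 1

/-- `O b m` is the ordinal obtained by substituting `ω` for the base `b`
throughout the hereditary base-`b` representation of `m` (with `O b 0 = 0`). -/
noncomputable def O (b : ℕ) (m : ℕ) : Ordinal :=
  if m = 0 then 0
  else
    Ordinal.omega0 ^ O b (Nat.log b m) * ((m / b ^ Nat.log b m : ℕ) : Ordinal)
      + O b (m % b ^ Nat.log b m)
termination_by m
decreasing_by
  · exact Nat.log_lt_self b (by assumption)
  · have hpos : 0 < b ^ Nat.log b m := by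
      rcases Nat.eq_zero_or_pos b with hb | hb
      · simp [hb]
      · exact pow_pos hb _
    exact lt_of_lt_of_le (Nat.mod_lt _ hpos) (Nat.pow_log_le_self b (by assumption))


/-!
Replacing the base by `ω` in a hereditary representation gives an ordinal that does not change
when the base is bumped and strictly drops when `1` is subtracted, so every Goodstein-type
sequence, in particular `L(·, k)`, reaches `0`. Bumping never decreases a number, so `L(·, k)`
drops by at most one per step and stays above `k ^ k - n`; once `G(m)` has reached `0` it stays
there, so `G(m)` has only finitely many nonzero terms, and a large `k` dominates them all.
Conversely, domination at a time `q` with `L(q, k) = 0` forces `G(q, m) = 0`.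
-/

open Ordinal

lemma hsub_zero (b u : ℕ) : hsub b u 0 = 0 := by rw [hsub]; simp

lemma hsub_of_ne_zero (b u : ℕ) {m : ℕ} (hm : m ≠ 0) :
    hsub b u m = u ^ hsub b u (Nat.log b m) * (m / b ^ Nat.log b m)
      + hsub b u (m % b ^ Nat.log b m) := by
  rw [hsub]; simp [hm]

lemma O_zero (b : ℕ) : O b 0 = 0 := by rw [O]; simp

lemma O_of_ne_zero (b : ℕ) {m : ℕ} (hm : m ≠ 0) :
    O b m = ω ^ O b (Nat.log b m) * ((m / b ^ Nat.log b m : ℕ) : Ordinal)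
      + O b (m % b ^ Nat.log b m) := by
  rw [O]; simp [hm]

section Digits

variable {b m : ℕ}

lemma pow_log_pos (b m : ℕ) : 0 < b ^ Nat.log b m := by
  rcases Nat.eq_zero_or_pos b with rfl | hb
  · simp
  · exact pow_pos hb _

lemma one_le_div_pow_log (hm : m ≠ 0) : 1 ≤ m / b ^ Nat.log b m :=
  (Nat.one_le_div_iff (pow_log_pos b m)).2 (Nat.pow_log_le_self b hm)

lemma div_pow_log_lt (hb : 1 < b) : m / b ^ Nat.log b m < b := by
  rw [Nat.div_lt_iff_lt_mul (pow_log_pos b m), ← pow_succ']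
  exact Nat.lt_pow_succ_log_self hb m

lemma mod_pow_log_lt (b m : ℕ) : m % b ^ Nat.log b m < b ^ Nat.log b m :=
  Nat.mod_lt _ (pow_log_pos b m)

lemma mod_pow_log_lt_self (hm : m ≠ 0) : m % b ^ Nat.log b m < m :=
  (mod_pow_log_lt b m).trans_le (Nat.pow_log_le_self b hm)

lemma log_pow_mul_add {u a d r : ℕ} (hd : 0 < d) (hdu : d < u) (hr : r < u ^ a) :
    Nat.log u (u ^ a * d + r) = a := by
  apply Nat.log_eq_of_pow_le_of_lt_pow
  · exact (Nat.le_mul_of_pos_right _ hd).trans (Nat.le_add_right _ _)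
  · calc u ^ a * d + r < u ^ a * (d + 1) := by rw [Nat.mul_succ]; omega
      _ ≤ u ^ a * u := Nat.mul_le_mul_left _ hdu
      _ = u ^ (a + 1) := (pow_succ u a).symm

end Digits

lemma opow_mul_succ_le_opow {b d : ℕ} {w a a' : Ordinal} (hw : (b : Ordinal) ≤ w) (hd : d < b)
    (ha : a < a') : w ^ a * ((d : Ordinal) + 1) ≤ w ^ a' := by
  have hdw : (d : Ordinal) + 1 ≤ w := hw.trans' (by exact_mod_cast hd)
  calc w ^ a * ((d : Ordinal) + 1) ≤ w ^ a * w := mul_le_mul_right hdw _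
    _ = w ^ (a + 1) := (opow_add_one w a).symm
    _ ≤ w ^ a' := opow_le_opow_right ((Order.one_le_iff_pos.1 le_add_self).trans_le hdw)
        (Order.add_one_le_of_lt ha)

/-- `f` reads hereditary base-`b` representations with `w` in place of the base `b`:
`O b` does so with `w = ω`, and `hsub b u`, cast to ordinals, with `w = u`. -/
structure IsHereditaryEval (b : ℕ) (w : Ordinal.{u}) (f : ℕ → Ordinal.{u}) : Prop where
  map_zero : f 0 = 0
  eq_of_ne_zero {m : ℕ} (hm : m ≠ 0) :
    f m = w ^ f (Nat.log b m) * ((m / b ^ Nat.log b m : ℕ) : Ordinal) + f (m % b ^ Nat.log b m)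

namespace IsHereditaryEval

variable {b : ℕ} {w : Ordinal} {f : ℕ → Ordinal}

lemma opow_le (hf : IsHereditaryEval b w f) {m : ℕ} (hm : m ≠ 0) :
    w ^ f (Nat.log b m) ≤ f m := by
  rw [hf.eq_of_ne_zero hm]
  exact (le_mul_of_one_le_right' (by exact_mod_cast one_le_div_pow_log hm)).trans le_self_add

lemma lt_opow_mul_succ (hf : IsHereditaryEval b w f) {m : ℕ} (hm : m ≠ 0)
    (hrem : f (m % b ^ Nat.log b m) < w ^ f (Nat.log b m)) :
    f m < w ^ f (Nat.log b m) * (((m / b ^ Nat.log b m : ℕ) : Ordinal) + 1) := by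
  rw [hf.eq_of_ne_zero hm, mul_add_one]
  exact add_lt_add_right hrem _

/- Neither monotonicity nor the bound `f r < w ^ f n` for `r < b ^ n` goes through alone:
they are proved by a joint strong induction on `n`, whose two steps follow. -/
section Induction

variable (hf : IsHereditaryEval b w f) (hb : 1 < b) (hw : (b : Ordinal) ≤ w) {n : ℕ}
  (hbound : ∀ j < n, ∀ r < b ^ j, f r < w ^ f j)
include hf hb hw hbound

lemma apply_lt_opow_of_ih (hmono : ∀ x < n, f x < f n) {r : ℕ} (hr : r < b ^ n) :
    f r < w ^ f n := by
  rcases eq_or_ne r 0 with rfl | hr0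
  · rw [hf.map_zero]
    exact opow_pos _ (hw.trans_lt' (by exact_mod_cast hb.pos))
  have hlog : Nat.log b r < n := Nat.log_lt_of_lt_pow hr0 hr
  calc f r < w ^ f (Nat.log b r) * (((r / b ^ Nat.log b r : ℕ) : Ordinal) + 1) :=
        hf.lt_opow_mul_succ hr0 (hbound _ hlog _ (mod_pow_log_lt b r))
    _ ≤ w ^ f n := opow_mul_succ_le_opow hw (div_pow_log_lt hb) (hmono _ hlog)

lemma apply_lt_apply_of_ih (hmono : ∀ j < n, ∀ x < j, f x < f j) {x : ℕ} (hx : x < n) :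
    f x < f n := by
  have hn : n ≠ 0 := by omega
  rcases eq_or_ne x 0 with rfl | hx0
  · rw [hf.map_zero]
    exact (opow_pos _ (hw.trans_lt' (by exact_mod_cast hb.pos))).trans_le (hf.opow_le hn)
  have hxlt := hf.lt_opow_mul_succ hx0
    (hbound _ ((Nat.log_lt_self b hx0).trans hx) _ (mod_pow_log_lt b x))
  rcases (Nat.log_mono_right hx.le).lt_or_eq with hlog | hlog
  · calc f x < _ := hxlt
      _ ≤ w ^ f (Nat.log b n) := opow_mul_succ_le_opow hw (div_pow_log_lt hb)
          (hmono _ (Nat.log_lt_self b hn) _ hlog)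
      _ ≤ f n := hf.opow_le hn
  rw [hlog] at hxlt
  rcases (Nat.div_le_div_right (c := b ^ Nat.log b n) hx.le).lt_or_eq with hdig | hdig
  · calc f x < _ := hxlt
      _ ≤ w ^ f (Nat.log b n) * ((n / b ^ Nat.log b n : ℕ) : Ordinal) :=
          mul_le_mul_right (by exact_mod_cast hdig) _
      _ ≤ f n := by rw [hf.eq_of_ne_zero hn]; exact le_self_add
  have hrem : x % b ^ Nat.log b n < n % b ^ Nat.log b n := by
    have := Nat.div_add_mod x (b ^ Nat.log b n)
    have := Nat.div_add_mod n (b ^ Nat.log b n)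
    rw [hdig] at *
    omega
  rw [hf.eq_of_ne_zero hx0, hf.eq_of_ne_zero hn, hlog, hdig]
  exact add_lt_add_right (hmono _ (mod_pow_log_lt_self hn) _ hrem) _

end Induction

variable (hf : IsHereditaryEval b w f) (hb : 1 < b) (hw : (b : Ordinal) ≤ w)
include hf hb hw

lemma forall_lt_and_lt_opow (n : ℕ) : (∀ x < n, f x < f n) ∧ ∀ r < b ^ n, f r < w ^ f n := by
  induction n using Nat.strong_induction_on with
  | _ n ih =>
    have hbound := fun j hj => (ih j hj).2
    have hmono : ∀ x < n, f x < f n := fun _ =>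
      hf.apply_lt_apply_of_ih hb hw hbound (fun j hj => (ih j hj).1)
    exact ⟨hmono, fun r => hf.apply_lt_opow_of_ih hb hw hbound hmono⟩

lemma strictMono : StrictMono f := fun x n h => (hf.forall_lt_and_lt_opow hb hw n).1 x h

lemma lt_opow_of_lt_pow {r n : ℕ} (h : r < b ^ n) : f r < w ^ f n :=
  (hf.forall_lt_and_lt_opow hb hw n).2 r h

end IsHereditaryEval

lemma isHereditaryEval_O (b : ℕ) : IsHereditaryEval b ω (O b) := ⟨O_zero b, O_of_ne_zero b⟩

lemma isHereditaryEval_hsub (b u : ℕ) :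
    IsHereditaryEval.{0} b u (fun m => (hsub b u m : Ordinal)) where
  map_zero := by rw [hsub_zero, Nat.cast_zero]
  eq_of_ne_zero hm := by
    rw [hsub_of_ne_zero b u hm, Nat.cast_add, natCast_mul, natCast_pow, opow_natCast]

section Hsub

variable {b u : ℕ} (hb : 1 < b) (hbu : b ≤ u)
include hb hbu

lemma hsub_strictMono : StrictMono (hsub b u) := fun _ _ h => by
  exact_mod_cast (isHereditaryEval_hsub b u).strictMono hb (by exact_mod_cast hbu) h

lemma le_hsub (m : ℕ) : m ≤ hsub b u m := (hsub_strictMono hb hbu).id_le m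

lemma hsub_lt_pow_hsub {r n : ℕ} (h : r < b ^ n) : hsub b u r < u ^ hsub b u n := by
  have := (isHereditaryEval_hsub b u).lt_opow_of_lt_pow hb (by exact_mod_cast hbu) h
  rwa [opow_natCast, ← natCast_pow, Nat.cast_lt] at this

lemma O_hsub (m : ℕ) : O u (hsub b u m) = O b m := by
  induction m using Nat.strong_induction_on with
  | _ m ih =>
    rcases eq_or_ne m 0 with rfl | hm
    · rw [hsub_zero, O_zero, O_zero]
    have hne : hsub b u m ≠ 0 := (Nat.pos_of_ne_zero hm).trans_le (le_hsub hb hbu m) |>.ne'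
    have hr := hsub_lt_pow_hsub hb hbu (mod_pow_log_lt b m)
    have hu : 0 < u ^ hsub b u (Nat.log b m) := pow_pos (by omega) _
    rw [O_of_ne_zero u hne, hsub_of_ne_zero b u hm,
      log_pow_mul_add (one_le_div_pow_log hm) ((div_pow_log_lt hb).trans_le hbu) hr,
      Nat.mul_add_div hu, Nat.div_eq_of_lt hr, add_zero, Nat.mul_add_mod, Nat.mod_eq_of_lt hr,
      ih _ (Nat.log_lt_self b hm), ih _ (mod_pow_log_lt_self hm), O_of_ne_zero b hm]

end Hsub

lemma B_zero (b : ℕ) : B b 0 = 0 := hsub_zero b (b + 1)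

lemma le_B {b : ℕ} (hb : 1 < b) (m : ℕ) : m ≤ B b m := le_hsub hb b.le_succ m

lemma O_B_sub_one_lt {b m : ℕ} (hb : 1 < b) (hm : m ≠ 0) : O (b + 1) (B b m - 1) < O b m := by
  rw [← O_hsub hb b.le_succ m]
  exact (isHereditaryEval_O (b + 1)).strictMono (by omega) (natCast_lt_omega0 _).le
    (show B b m - 1 < B b m by have := le_B hb m; omega)

/-- `s n` is written in hereditary base `b + n`. -/
def IsGoodsteinSeq (b : ℕ) (s : ℕ → ℕ) : Prop := ∀ n, s (n + 1) = B (b + n) (s n) - 1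

namespace IsGoodsteinSeq

variable {b : ℕ} {s : ℕ → ℕ}

lemma exists_eq_zero (hs : IsGoodsteinSeq b s) (hb : 1 < b) : ∃ n, s n = 0 := by
  by_contra! h
  obtain ⟨n, hn⟩ := WellFounded.not_rel_apply_succ (r := (· < ·)) fun n => O.{0} (b + n) (s n)
  apply hn
  rw [hs n, ← add_assoc]
  exact O_B_sub_one_lt (by omega) (h n)

lemma apply_zero_le_apply_add (hs : IsGoodsteinSeq b s) (hb : 1 < b) (n : ℕ) : s 0 ≤ s n + n := by
  induction n with
  | zero => simp
  | succ n ih =>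
    have := le_B (b := b + n) (by omega) (s n)
    rw [hs n]
    omega

lemma eq_zero_of_le (hs : IsGoodsteinSeq b s) {n₀ n : ℕ} (h₀ : s n₀ = 0) (hn : n₀ ≤ n) :
    s n = 0 := by
  induction n, hn using Nat.le_induction with
  | base => exact h₀
  | succ n _ ih => rw [hs n, ih, B_zero]

end IsGoodsteinSeq

lemma isGoodsteinSeq_G (m : ℕ) : IsGoodsteinSeq 2 (fun n => G (n + 1) m) := fun n => by
  rw [Nat.add_comm 2 n]
  rfl

lemma isGoodsteinSeq_L (k : ℕ) : IsGoodsteinSeq k (fun n => L (n + 1) k) := fun _ => rfl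

theorem third_goodstein_sequence_theorem_general (m : ℕ) :
    (∃ n : ℕ, 1 ≤ n ∧ G n m = 0) ↔
      ∃ k : ℕ, 2 ≤ k ∧ (∀ n : ℕ, 1 ≤ n → G n m ≠ 0 → G n m < L n k) ∧
        (∃ q : ℕ, 1 ≤ q ∧ L q k = 0) := by
  constructor
  · rintro ⟨_ | n₀, hn₀, hG⟩
    · omega
    set M := (Finset.range n₀).sup fun j => G (j + 1) m
    set k := M + n₀ + 2
    refine ⟨k, by omega, ?_, ?_⟩
    · rintro (_ | j) hj hne
      · omega
      have hjn : j < n₀ := by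
        by_contra! h
        exact hne ((isGoodsteinSeq_G m).eq_zero_of_le hG h)
      have hGM : G (j + 1) m ≤ M := Finset.le_sup (f := fun j => G (j + 1) m)
        (Finset.mem_range.2 hjn)
      have hL : k ^ k ≤ L (j + 1) k + j := (isGoodsteinSeq_L k).apply_zero_le_apply_add (by omega) j
      have hk : k ≤ k ^ k := Nat.le_self_pow (by omega) k
      omega
    · obtain ⟨q, hq⟩ := (isGoodsteinSeq_L k).exists_eq_zero (by omega)
      exact ⟨q + 1, by omega, hq⟩
  · rintro ⟨k, -, hdom, q, hq, hLq⟩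
    refine ⟨q, hq, ?_⟩
    by_contra hne
    have := hdom q hq hne
    omega

/-- **Third Goodstein sequence theorem**: for every `m ≥ 1`, the Goodstein
sequence of `m` reaches `0` if and only if there exists `k ≥ 2` such that
`L · k` dominates `G · m` (for every `n ≥ 1` with `G n m ≠ 0` one has
`L n k > G n m`) and `L · k` itself reaches `0`. -/
theorem third_goodstein_sequence_theorem (m : ℕ) (hm : 1 ≤ m) :
    (∃ n : ℕ, 1 ≤ n ∧ G n m = 0) ↔
      ∃ k : ℕ, 2 ≤ k ∧ (∀ n : ℕ, 1 ≤ n → G n m ≠ 0 → G n m < L n k) ∧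
        (∃ q : ℕ, 1 ≤ q ∧ L q k = 0) :=
  third_goodstein_sequence_theorem_general m
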